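/- Restricting provable MALL(I) sequents preserves provability: if the sequent ⊢_J Γ is provable in MALL(I), then for any K ⊆ I the restricted sequent ⊢_{J∩K} Γ|_K is provable, by induction on the proof. -/
import Mathlib


namespace IndexedMALL

variable {I : Type*}

/-- Formulas of Bucciarelli–Ehrhard indexed multiplicative–additive linear
logic `MALL(I)`, built from indexed constants by the binary connectives. -/
inductive Formula (I : Type*) where
  | one (J : Set I)
  | bot (J : Set I)
  | zero
  | top
  | tensor (A B : Formula I)
  | par (A B : Formula I)
  | oplus (A B : Formula I)
  | with_ (A B : Formula I)

/-- The domain `d(A) ⊆ I` of a `MALL(I)` formula. -/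
def dom : Formula I → Set I
  | .one J => J
  | .bot J => J
  | .zero => ∅
  | .top => ∅
  | .tensor A B => dom A
  | .par A B => dom A
  | .oplus A B => dom A ∪ dom B
  | .with_ A B => dom A ∪ dom B

/-- Well-formedness: multiplicative connectives join formulas of the same
domain, additive connectives join formulas of disjoint domains. -/
def WF : Formula I → Prop
  | .one _ => True
  | .bot _ => True
  | .zero => True
  | .top => True
  | .tensor A B => WF A ∧ WF B ∧ dom A = dom B
  | .par A B => WF A ∧ WF B ∧ dom A = dom B
  | .oplus A B => WF A ∧ WF B ∧ Disjoint (dom A) (dom B)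
  | .with_ A B => WF A ∧ WF B ∧ Disjoint (dom A) (dom B)

/-- Linear negation by De Morgan duality, preserving domains. -/
def neg : Formula I → Formula I
  | .one J => .bot J
  | .bot J => .one J
  | .zero => .top
  | .top => .zero
  | .tensor A B => .par (neg A) (neg B)
  | .par A B => .tensor (neg A) (neg B)
  | .oplus A B => .with_ (neg A) (neg B)
  | .with_ A B => .oplus (neg A) (neg B)

/-- Restriction `A|_K` of a `MALL(I)` formula by a set of indices `K`. -/
def restrict : Formula I → Set I → Formula I
  | .one J, K => .one (J ∩ K)
  | .bot J, K => .bot (J ∩ K)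
  | .zero, _ => .zero
  | .top, _ => .top
  | .tensor A B, K => .tensor (restrict A K) (restrict B K)
  | .par A B, K => .par (restrict A K) (restrict B K)
  | .oplus A B, K => .oplus (restrict A K) (restrict B K)
  | .with_ A B, K => .with_ (restrict A K) (restrict B K)

end IndexedMALL

namespace IndexedMALL

/-- Provability of `MALL(I)` sequents `⊢_J Γ`. -/
inductive Prov {I : Type*} : Set I → List (Formula I) → Prop
  | one (J : Set I) : Prov J [.one J]
  | top (Γ : List (Formula I)) : Prov ∅ (Γ ++ [.top])
  | bot {J Γ} : Prov J Γ → Prov J (Γ ++ [.bot J])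
  | tensor {J : Set I} {Γ₁ Γ₂ A B} :
      Prov J (Γ₁ ++ [A]) → Prov J (Γ₂ ++ [B]) →
      Prov J (Γ₁ ++ Γ₂ ++ [.tensor A B])
  | par {J : Set I} {Γ A B} :
      Prov J (Γ ++ [A, B]) → Prov J (Γ ++ [.par A B])
  | with_ {J₁ J₂ : Set I} {Γ A₁ A₂} (h : Disjoint J₁ J₂)
      (hA₁ : dom A₁ = J₁) (hA₂ : dom A₂ = J₂) :
      Prov J₁ (Γ.map (fun A => restrict A J₁) ++ [A₁]) →
      Prov J₂ (Γ.map (fun A => restrict A J₂) ++ [A₂]) →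
      Prov (J₁ ∪ J₂) (Γ ++ [.with_ A₁ A₂])
  | oplus₁ {J : Set I} {Γ A₁ A₂} (h : dom A₂ = ∅) :
      Prov J (Γ ++ [A₁]) → Prov J (Γ ++ [.oplus A₁ A₂])
  | oplus₂ {J : Set I} {Γ A₁ A₂} (h : dom A₁ = ∅) :
      Prov J (Γ ++ [A₂]) → Prov J (Γ ++ [.oplus A₁ A₂])
  | exch {J : Set I} {Γ Γ'} : Γ.Perm Γ' → Prov J Γ → Prov J Γ'

end IndexedMALL

open IndexedMALL

lemma dom_restrict {I : Type*} (A : Formula I) (K : Set I) :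
    dom (restrict A K) = dom A ∩ K := by
  induction A with
  | one J => rfl
  | bot J => rfl
  | zero => simp [restrict, dom]
  | top => simp [restrict, dom]
  | tensor A B ihA ihB => simpa [restrict, dom] using ihA
  | par A B ihA ihB => simpa [restrict, dom] using ihA
  | oplus A B ihA ihB => simp [restrict, dom, ihA, ihB, Set.union_inter_distrib_right]
  | with_ A B ihA ihB => simp [restrict, dom, ihA, ihB, Set.union_inter_distrib_right]

lemma restrict_restrict {I : Type*} (A : Formula I) (L K : Set I) :
    restrict (restrict A L) K = restrict A (L ∩ K) := by
  induction A with
  | one J => simp [restrict, Set.inter_assoc]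
  | bot J => simp [restrict, Set.inter_assoc]
  | zero => rfl
  | top => rfl
  | tensor A B ihA ihB => simp [restrict, ihA, ihB]
  | par A B ihA ihB => simp [restrict, ihA, ihB]
  | oplus A B ihA ihB => simp [restrict, ihA, ihB]
  | with_ A B ihA ihB => simp [restrict, ihA, ihB]

theorem restrict_provable {I : Type*} {J : Set I} {Γ : List (Formula I)}
    (h : Prov J Γ) (K : Set I) :
    Prov (J ∩ K) (Γ.map (fun A => restrict A K)) := by
  induction h with
  | one J => simpa [restrict] using Prov.one (J ∩ K)
  | top Γ =>
      simpa [restrict, Set.empty_inter] using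
        Prov.top (I := I) (Γ.map (fun A => restrict A K))
  | bot _ ih => simpa [restrict] using Prov.bot ih
  | tensor _ _ ih₁ ih₂ =>
      simp only [List.map_append, List.map_cons, List.map_nil] at ih₁ ih₂ ⊢
      simpa [restrict] using Prov.tensor ih₁ ih₂
  | par _ ih =>
      simp only [List.map_append, List.map_cons, List.map_nil] at ih ⊢
      simpa [restrict] using Prov.par ih
  | @with_ J₁ J₂ Γ A₁ A₂ hd hA₁ hA₂ _ _ ih₁ ih₂ =>
      have h' : Disjoint (J₁ ∩ K) (J₂ ∩ K) :=
        (hd.mono Set.inter_subset_left Set.inter_subset_left)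
      have e : (J₁ ∪ J₂) ∩ K = (J₁ ∩ K) ∪ (J₂ ∩ K) := Set.union_inter_distrib_right ..
      rw [e]
      have main := Prov.with_ (Γ := Γ.map (fun A => restrict A K))
        (A₁ := restrict A₁ K) (A₂ := restrict A₂ K) h'
        (by simp [dom_restrict, hA₁]) (by simp [dom_restrict, hA₂]) ?_ ?_
      · simpa [restrict] using main
      · simpa [List.map_map, Function.comp_def, restrict_restrict, Set.inter_comm K, Set.inter_assoc, Set.inter_self] using ih₁
      · simpa [List.map_map, Function.comp_def, restrict_restrict, Set.inter_comm K, Set.inter_assoc, Set.inter_self] using ih₂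
  | @oplus₁ J Γ A₁ A₂ h _ ih =>
      simp only [List.map_append, List.map_cons, List.map_nil] at ih
      simpa [restrict] using Prov.oplus₁ (by simp [dom_restrict, h]) ih
  | @oplus₂ J Γ A₁ A₂ h _ ih =>
      simp only [List.map_append, List.map_cons, List.map_nil] at ih
      simpa [restrict] using Prov.oplus₂ (by simp [dom_restrict, h]) ih
  | exch p _ ih => exact Prov.exch (p.map _) ih
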